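/- arXiv:2409.18909 — 2 statements merged into one kernel-verified Lean document; each statement's English description precedes it below -/
import Mathlib

section
/- Let N₁ ≤ N₂ be positive integers and let x ∈ I with x ≥ μ. Then P(∃ n with N₁ ≤ n ≤ N₂ such that μ̂_n ≥ x) ≤ exp(−N₁ · kl(x, μ)). -/
/-!
Let `θ'` be the parameter with mean `x`. The likelihood ratio of `ν_θ'` to `ν_θ` along the
sample, `Mₙ = ∏_{i<n} exp ((θ' - θ) Xᵢ - (b θ' - b θ))`, is a nonnegative martingale of mean one.
Since `θ ≤ θ'` and `kl x μ ≥ 0` (monotonicity of `b'` and convexity of `b`), on `{μ̂ₙ ≥ x}` with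
`n ≥ N₁` we have `Mₙ ≥ exp (n kl x μ) ≥ exp (N₁ kl x μ)`, and Doob's maximal inequality bounds the
probability that `M` reaches this level before time `N₂` by `exp (-N₁ kl x μ)`.
-/

open MeasureTheory Real Set

section Calculus

variable {D : Set ℝ} {f f' f'' : ℝ → ℝ}

theorem ConvexOn.sub_le_mul_sub_of_hasDerivAt (hf : ConvexOn ℝ D f) {x y f'y : ℝ} (hx : x ∈ D)
    (hy : y ∈ D) (hxy : x ≤ y) (hderiv : HasDerivAt f f'y y) : f y - f x ≤ f'y * (y - x) := by
  rcases hxy.eq_or_lt with rfl | hlt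
  · simp
  have hslope := hf.slope_le_of_hasDerivAt hx hy hlt hderiv
  rwa [slope_def_field, div_le_iff₀ (sub_pos.mpr hlt)] at hslope

theorem strictMonoOn_of_hasDerivAt_pos (hD : Convex ℝ D)
    (hf : ∀ x ∈ D, HasDerivAt f (f' x) x) (hpos : ∀ x ∈ D, 0 < f' x) : StrictMonoOn f D :=
  strictMonoOn_of_hasDerivWithinAt_pos hD (fun x hx => (hf x hx).continuousAt.continuousWithinAt)
    (fun x hx => (hf x (interior_subset hx)).hasDerivWithinAt)
    (fun x hx => hpos x (interior_subset hx))

theorem convexOn_of_hasDerivAt2_nonneg (hD : Convex ℝ D)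
    (hf : ∀ x ∈ D, HasDerivAt f (f' x) x) (hf' : ∀ x ∈ D, HasDerivAt f' (f'' x) x)
    (hnonneg : ∀ x ∈ D, 0 ≤ f'' x) : ConvexOn ℝ D f :=
  convexOn_of_hasDerivWithinAt2_nonneg hD (fun x hx => (hf x hx).continuousAt.continuousWithinAt)
    (fun x hx => (hf x (interior_subset hx)).hasDerivWithinAt)
    (fun x hx => (hf' x (interior_subset hx)).hasDerivWithinAt)
    (fun x hx => hnonneg x (interior_subset hx))

end Calculus

theorem exp_mul_le_prod_exp_of_le_sum {δ c x : ℝ} (hδ : 0 ≤ δ) (hκ : 0 ≤ δ * x - c) {N n : ℕ}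
    (hNn : N ≤ n) (a : ℕ → ℝ) (hsum : n * x ≤ ∑ i ∈ Finset.range n, a i) :
    exp (N * (δ * x - c)) ≤ ∏ i ∈ Finset.range n, exp (δ * a i - c) := by
  rw [← exp_sum, exp_le_exp, Finset.sum_sub_distrib, ← Finset.mul_sum, Finset.sum_const,
    Finset.card_range, nsmul_eq_mul]
  have hNn' : (N : ℝ) ≤ n := Nat.cast_le.mpr hNn
  nlinarith [mul_le_mul_of_nonneg_left hsum hδ, mul_le_mul_of_nonneg_right hNn' hκ]

section Tilting

variable {ρ : Measure ℝ} {θ θ' c c' : ℝ}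

theorem exp_tilt_mul_exp (y : ℝ) :
    exp ((θ' - θ) * y - (c' - c)) * exp (θ * y - c) = exp (-c') * exp (θ' * y) := by
  rw [← exp_add, ← exp_add]; ring_nf

theorem integrable_exp_tilt_withDensity (hθ' : Integrable (fun y => exp (θ' * y)) ρ) :
    Integrable (fun y => exp ((θ' - θ) * y - (c' - c)))
      (ρ.withDensity fun y => ENNReal.ofReal (exp (θ * y - c))) := by
  rw [integrable_withDensity_iff (by fun_prop) (ae_of_all _ fun _ => ENNReal.ofReal_lt_top)]
  refine (hθ'.const_mul (exp (-c'))).congr (ae_of_all _ fun y => ?_)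
  simp only [ENNReal.toReal_ofReal (exp_pos _).le, exp_tilt_mul_exp]

theorem integral_exp_tilt_withDensity (hθ' : ∫ y, exp (θ' * y) ∂ρ = exp c') :
    ∫ y, exp ((θ' - θ) * y - (c' - c)) ∂(ρ.withDensity fun y => ENNReal.ofReal (exp (θ * y - c)))
      = 1 := by
  rw [integral_withDensity_eq_integral_toReal_smul (by fun_prop)
    (ae_of_all _ fun _ => ENNReal.ofReal_lt_top)]
  simp only [ENNReal.toReal_ofReal (exp_pos _).le, smul_eq_mul, mul_comm (exp (θ * _ - c)),
    exp_tilt_mul_exp]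
  rw [integral_const_mul, hθ', ← exp_add, neg_add_cancel, exp_zero]

end Tilting

namespace ProbabilityTheory

variable {Ω : Type*} {mΩ : MeasurableSpace Ω} {μ : Measure Ω} {Y : ℕ → Ω → ℝ}

theorem iIndepFun.integrable_prod_range (hind : iIndepFun Y μ) (hY : ∀ i, Measurable (Y i))
    (hint : ∀ i, Integrable (Y i) μ) (n : ℕ) : Integrable (∏ i ∈ Finset.range n, Y i) μ := by
  induction n with
  | zero => have := hind.isProbabilityMeasure; exact integrable_const (1 : ℝ)
  | succ n ih =>
    rw [Finset.prod_range_succ]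
    exact (hind.indepFun_finsetProd_of_notMem hY Finset.notMem_range_self).integrable_mul ih
      (hint n)

theorem iIndepFun.martingale_prod_range_succ (hind : iIndepFun Y μ)
    (hY : ∀ i, StronglyMeasurable (Y i)) (hint : ∀ i, Integrable (Y i) μ)
    (hone : ∀ i, μ[Y i] = 1) :
    Martingale (fun n => ∏ i ∈ Finset.range (n + 1), Y i) (Filtration.natural Y hY) μ := by
  have := hind.isProbabilityMeasure
  have hYm : ∀ i, Measurable (Y i) := fun i => (hY i).measurable
  have hadapted : StronglyAdapted (Filtration.natural Y hY)
      (fun n => ∏ i ∈ Finset.range (n + 1), Y i) := fun n =>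
    Finset.stronglyMeasurable_prod _ fun i hi =>
      (Filtration.stronglyAdapted_natural hY i).mono
        (Filtration.mono _ (Nat.lt_succ_iff.mp (Finset.mem_range.mp hi)))
  refine martingale_nat hadapted (fun n => hind.integrable_prod_range hYm hint _) (fun n => ?_)
  have hnext : ∏ i ∈ Finset.range (n + 1 + 1), Y i =
      (∏ i ∈ Finset.range (n + 1), Y i) * Y (n + 1) :=
    Finset.prod_range_succ _ _
  have hcond := hind.condExp_natural_ae_eq_of_lt hY (Nat.lt_succ_self n)
  rw [hone] at hcond
  rw [hnext]
  refine ((condExp_mul_of_stronglyMeasurable_left (hadapted n) ?_ (hint _)).trans ?_).symm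
  · rw [← hnext]; exact hind.integrable_prod_range hYm hint _
  filter_upwards [hcond] with ω hω
  simp [hω]

theorem iIndepFun.integral_prod_range_succ (hind : iIndepFun Y μ)
    (hY : ∀ i, StronglyMeasurable (Y i)) (hint : ∀ i, Integrable (Y i) μ)
    (hone : ∀ i, μ[Y i] = 1) (n : ℕ) : μ[∏ i ∈ Finset.range (n + 1), Y i] = (1 : ℝ) := by
  have := hind.isProbabilityMeasure
  have hM := hind.martingale_prod_range_succ hY hint hone
  calc μ[∏ i ∈ Finset.range (n + 1), Y i]
      = μ[μ[∏ i ∈ Finset.range (n + 1), Y i | Filtration.natural Y hY 0]] :=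
        (integral_condExp (Filtration.le _ 0)).symm
    _ = μ[∏ i ∈ Finset.range 1, Y i] := by exact integral_congr_ae (hM.condExp_ae_eq n.zero_le)
    _ = (1 : ℝ) := by simpa using hone 0

/-- Ville's inequality over a finite horizon. -/
theorem iIndepFun.measure_exists_le_prod_range_le (hind : iIndepFun Y μ)
    (hY : ∀ i, Measurable (Y i)) (hint : ∀ i, Integrable (Y i) μ) (hone : ∀ i, μ[Y i] = 1)
    (hnonneg : ∀ i ω, 0 ≤ Y i ω) {c : ℝ} (hc : 0 < c) (n : ℕ) :
    μ {ω | ∃ k ≤ n, c ≤ ∏ i ∈ Finset.range (k + 1), Y i ω} ≤ ENNReal.ofReal c⁻¹ := by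
  have := hind.isProbabilityMeasure
  have hYs : ∀ i, StronglyMeasurable (Y i) := fun i => (hY i).stronglyMeasurable
  have hM := hind.martingale_prod_range_succ hYs hint hone
  have hM_nonneg : 0 ≤ fun n => ∏ i ∈ Finset.range (n + 1), Y i := fun n ω => by
    simpa [Finset.prod_apply] using Finset.prod_nonneg fun i _ => hnonneg i ω
  have hmax := maximal_ineq hM.submartingale hM_nonneg (ε := c.toNNReal) n
  simp only [Real.coe_toNNReal _ hc.le, Finset.le_sup'_iff, Finset.mem_range, Nat.lt_succ_iff,
    Finset.prod_apply] at hmax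
  have hsetInt : ∫ ω in {ω | ∃ k ≤ n, c ≤ ∏ i ∈ Finset.range (k + 1), Y i ω},
      ∏ i ∈ Finset.range (n + 1), Y i ω ∂μ ≤ 1 := by
    have hprod_int := hind.integrable_prod_range hY hint (n + 1)
    calc _ ≤ ∫ ω, ∏ i ∈ Finset.range (n + 1), Y i ω ∂μ :=
          setIntegral_le_integral (by simpa only [Finset.prod_fn] using hprod_int)
            (Filter.Eventually.of_forall fun ω => by simpa [Finset.prod_apply] using hM_nonneg n ω)
      _ = 1 := by simpa [Finset.prod_apply] using hind.integral_prod_range_succ hYs hint hone n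
  rw [ENNReal.ofReal_inv_of_pos hc, ENNReal.le_inv_iff_mul_le, mul_comm]
  exact hmax.trans (ENNReal.ofReal_le_one.mpr hsetInt)

end ProbabilityTheory

theorem measure_exists_le_sum_div_le_exp {Ω : Type*} {mΩ : MeasurableSpace Ω} {P : Measure Ω}
    {ρ : Measure ℝ} {θ θ' c c' x : ℝ} {X : ℕ → Ω → ℝ} (hXmeas : ∀ i, Measurable (X i))
    (hXlaw : ∀ i, P.map (X i) = ρ.withDensity fun y => ENNReal.ofReal (exp (θ * y - c)))
    (hXindep : ProbabilityTheory.iIndepFun X P) (hθ' : Integrable (fun y => exp (θ' * y)) ρ)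
    (hc' : ∫ y, exp (θ' * y) ∂ρ = exp c') (hle : θ ≤ θ') (hκ : 0 ≤ (θ' - θ) * x - (c' - c))
    {N₁ : ℕ} (hN₁ : 1 ≤ N₁) (N₂ : ℕ) :
    P {ω | ∃ n, N₁ ≤ n ∧ n ≤ N₂ ∧ x ≤ (∑ i ∈ Finset.range n, X i ω) / n} ≤
      ENNReal.ofReal (exp (-(N₁ * ((θ' - θ) * x - (c' - c))))) := by
  set g : ℝ → ℝ := fun y => exp ((θ' - θ) * y - (c' - c))
  have hg : Measurable g := by fun_prop
  have hgX_int : ∀ i, Integrable (g ∘ X i) P := fun i =>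
    (integrable_map_measure hg.aestronglyMeasurable (hXmeas i).aemeasurable).mp
      ((hXlaw i).symm ▸ integrable_exp_tilt_withDensity hθ')
  have hgX_one : ∀ i, ∫ ω, g (X i ω) ∂P = 1 := fun i => by
    rw [← integral_map (hXmeas i).aemeasurable hg.aestronglyMeasurable, hXlaw i,
      integral_exp_tilt_withDensity hc']
  have hsub : {ω | ∃ n, N₁ ≤ n ∧ n ≤ N₂ ∧ x ≤ (∑ i ∈ Finset.range n, X i ω) / n} ⊆
      {ω | ∃ k ≤ N₂ - 1, exp (N₁ * ((θ' - θ) * x - (c' - c))) ≤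
        ∏ i ∈ Finset.range (k + 1), g (X i ω)} := by
    rintro ω ⟨n, hN₁n, hnN₂, hmean⟩
    have hn : 0 < n := by omega
    refine ⟨n - 1, by omega, ?_⟩
    rw [Nat.sub_add_cancel hn]
    refine exp_mul_le_prod_exp_of_le_sum (sub_nonneg.mpr hle) hκ hN₁n _ ?_
    rwa [le_div_iff₀ (by exact_mod_cast hn), mul_comm] at hmean
  calc _ ≤ _ := measure_mono hsub
    _ ≤ ENNReal.ofReal (exp (N₁ * ((θ' - θ) * x - (c' - c))))⁻¹ :=
      (hXindep.comp (fun _ => g) fun _ => hg).measure_exists_le_prod_range_le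
        (fun i => hg.comp (hXmeas i)) hgX_int hgX_one (fun _ _ => (exp_pos _).le) (exp_pos _) _
    _ = _ := by rw [exp_neg]

theorem maximal_inequality_upper_general
    (ρ : Measure ℝ)
    (Θ : Set ℝ) (hΘ : Θ = {θ : ℝ | Integrable (fun x => exp (θ * x)) ρ})
    (b b' b'' : ℝ → ℝ)
    (hb : ∀ θ ∈ Θ, b θ = log (∫ x, exp (θ * x) ∂ρ))
    (hb' : ∀ θ ∈ interior Θ, HasDerivAt b (b' θ) θ)
    (hb'' : ∀ θ ∈ interior Θ, HasDerivAt b' (b'' θ) θ)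
    (hbpos : ∀ θ ∈ interior Θ, 0 < b'' θ)
    (Iset : Set ℝ) (hI : Iset = b' '' (interior Θ))
    (kl : ℝ → ℝ → ℝ)
    (hkl : ∀ θ ∈ interior Θ, ∀ θ' ∈ interior Θ,
      kl (b' θ) (b' θ') = b θ' - b θ - b' θ * (θ' - θ))
    (θ : ℝ) (hθ : θ ∈ interior Θ)
    (ν : Measure ℝ) (hν : ν = ρ.withDensity (fun x => ENNReal.ofReal (exp (θ * x - b θ))))
    (μ : ℝ) (hμ : μ = b' θ)
    (Ω : Type*) [MeasurableSpace Ω] (P : Measure Ω) [IsProbabilityMeasure P]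
    (X : ℕ → Ω → ℝ) (hXmeas : ∀ i, Measurable (X i))
    (hXlaw : ∀ i, Measure.map (X i) P = ν)
    (hXindep : ProbabilityTheory.iIndepFun X P)
    (μhat : ℕ → Ω → ℝ) (hμhat : ∀ s ω, μhat s ω = (∑ i ∈ Finset.range s, X i ω) / s)
    (N₁ N₂ : ℕ) (hN₁ : 1 ≤ N₁)
    (x : ℝ) (hx : x ∈ Iset) (hxμ : μ ≤ x) :
    P {ω | ∃ n, N₁ ≤ n ∧ n ≤ N₂ ∧ x ≤ μhat n ω} ≤
      ENNReal.ofReal (exp (-(N₁ : ℝ) * kl x μ)) := by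
  obtain ⟨θ', hθ', rfl⟩ : x ∈ b' '' interior Θ := hI ▸ hx
  subst hμ hν
  have hconv : Convex ℝ (interior Θ) := by
    rw [hΘ]; exact (ProbabilityTheory.convex_integrableExpSet (X := id) (μ := ρ)).interior
  have hle : θ ≤ θ' :=
    ((strictMonoOn_of_hasDerivAt_pos hconv hb'' hbpos).le_iff_le hθ hθ').mp hxμ
  have hkl_eq : kl (b' θ') (b' θ) = (θ' - θ) * b' θ' - (b θ' - b θ) := by
    rw [hkl θ' hθ' θ hθ]; ring
  have hkl_nonneg : 0 ≤ (θ' - θ) * b' θ' - (b θ' - b θ) := by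
    have := (convexOn_of_hasDerivAt2_nonneg hconv hb' hb'' fun t ht => (hbpos t ht).le
      ).sub_le_mul_sub_of_hasDerivAt hθ hθ' hle (hb' θ' hθ')
    linarith
  have hint_θ' : Integrable (fun y => exp (θ' * y)) ρ := by
    have := interior_subset hθ'; rwa [hΘ] at this
  have hρ : NeZero ρ := ⟨by
    rintro rfl
    simpa [Measure.map_eq_zero_iff (hXmeas 0).aemeasurable, IsProbabilityMeasure.ne_zero]
      using hXlaw 0⟩
  have hmgf_θ' : ∫ y, exp (θ' * y) ∂ρ = exp (b θ') := by
    rw [hb θ' (interior_subset hθ'), exp_log (integral_exp_pos hint_θ')]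
  simp only [hμhat, hkl_eq, neg_mul]
  exact measure_exists_le_sum_div_le_exp hXmeas hXlaw hXindep hint_θ' hmgf_θ' hle hkl_nonneg hN₁ N₂

/-- (Maximal inequality, upper tail.) Let `1 ≤ N₁ ≤ N₂` and `x ∈ I` with
`x ≥ μ`. Then `P(∃ n, N₁ ≤ n ≤ N₂, μ̂ₙ ≥ x) ≤ exp (-N₁ · kl x μ)`. -/
theorem maximal_inequality_upper
    (ρ : Measure ℝ) [SigmaFinite ρ]
    (Θ : Set ℝ) (hΘ : Θ = {θ : ℝ | Integrable (fun x => exp (θ * x)) ρ})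
    (b b' b'' : ℝ → ℝ)
    (hb : ∀ θ ∈ Θ, b θ = log (∫ x, exp (θ * x) ∂ρ))
    (hb' : ∀ θ ∈ interior Θ, HasDerivAt b (b' θ) θ)
    (hb'' : ∀ θ ∈ interior Θ, HasDerivAt b' (b'' θ) θ)
    (hbpos : ∀ θ ∈ interior Θ, 0 < b'' θ)
    (Iset : Set ℝ) (hI : Iset = b' '' (interior Θ))
    (kl : ℝ → ℝ → ℝ)
    (hkl : ∀ θ ∈ interior Θ, ∀ θ' ∈ interior Θ,
      kl (b' θ) (b' θ') = b θ' - b θ - b' θ * (θ' - θ))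
    (θ : ℝ) (hθ : θ ∈ interior Θ)
    (ν : Measure ℝ) (hν : ν = ρ.withDensity (fun x => ENNReal.ofReal (exp (θ * x - b θ))))
    (μ : ℝ) (hμ : μ = b' θ)
    (Ω : Type*) [MeasurableSpace Ω] (P : Measure Ω) [IsProbabilityMeasure P]
    (X : ℕ → Ω → ℝ) (hXmeas : ∀ i, Measurable (X i))
    (hXlaw : ∀ i, Measure.map (X i) P = ν)
    (hXindep : ProbabilityTheory.iIndepFun X P)
    (μhat : ℕ → Ω → ℝ) (hμhat : ∀ s ω, μhat s ω = (∑ i ∈ Finset.range s, X i ω) / s)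
    (N₁ N₂ : ℕ) (hN₁ : 1 ≤ N₁) (hN : N₁ ≤ N₂)
    (x : ℝ) (hx : x ∈ Iset) (hxμ : μ ≤ x) :
    P {ω | ∃ n, N₁ ≤ n ∧ n ≤ N₂ ∧ x ≤ μhat n ω} ≤
      ENNReal.ofReal (exp (-(N₁ : ℝ) * kl x μ)) :=
  maximal_inequality_upper_general ρ Θ hΘ b b' b'' hb hb' hb'' hbpos Iset hI kl hkl θ hθ ν hν μ hμ Ω
    P X hXmeas hXlaw hXindep μhat hμhat N₁ N₂ hN₁ x hx hxμ
end

section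
/- The function Φ is continuous on [0,∞)²; for every fixed y > 0 the map x ↦ Φ(x, y) is strictly increasing on [0,∞); for every fixed x > 0 the map y ↦ Φ(x, y) is strictly increasing on [0,∞); and for every x ≥ 0 and y > 0, Φ(x, y) < y · kl(μ_j, μ₁). -/
/-!
Writing `μ = b' θ`, `kl μ (b' θ')` is the Bregman divergence `D_θ(θ') = b θ' - b θ - b' θ (θ' - θ)`
of the strictly convex `b`, so `Φ x y` is the infimum over `θ` of `x D_θ₁(θ) + y D_θⱼ(θ)`.
Both divergences grow as `θ` leaves `[θⱼ, θ₁]`, so the infimum is a minimum attained on this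
compact interval, where the divergences are bounded: hence `Φ` is Lipschitz on the quadrant.
For `y > 0` the objective has derivative `y (μ₁ - μⱼ) ≠ 0` at `θ₁`, so `θ₁` is not a minimiser.
This gives `Φ x y < y D_θⱼ(θ₁)`, and since the coefficient `D_θ₁(θ)` of `x` is positive at a
minimiser `θ ≠ θ₁`, lowering `x` strictly lowers `Φ`. The roles of `x` and `y` are symmetric.
-/

open MeasureTheory Real Set

def bregmanDiv (b b' : ℝ → ℝ) (τ θ : ℝ) : ℝ := b θ - b τ - b' τ * (θ - τ)

def bregmanMix (b b' : ℝ → ℝ) (τ₁ τ₂ x y θ : ℝ) : ℝ :=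
  x * bregmanDiv b b' τ₁ θ + y * bregmanDiv b b' τ₂ θ

noncomputable def bregmanMixInf (b b' : ℝ → ℝ) (s : Set ℝ) (τ₁ τ₂ x y : ℝ) : ℝ :=
  sInf (bregmanMix b b' τ₁ τ₂ x y '' s)

section Bregman

variable {s : Set ℝ} {b b' : ℝ → ℝ} {τ σ θ : ℝ}

@[simp]
lemma bregmanDiv_self : bregmanDiv b b' τ τ = 0 := by simp [bregmanDiv]

lemma bregmanDiv_eq_add (τ σ θ : ℝ) :
    bregmanDiv b b' τ θ =
      bregmanDiv b b' τ σ + bregmanDiv b b' σ θ + (b' σ - b' τ) * (θ - σ) := by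
  unfold bregmanDiv; ring

lemma hasDerivAt_bregmanDiv (hb : HasDerivAt b (b' θ) θ) (τ : ℝ) :
    HasDerivAt (bregmanDiv b b' τ) (b' θ - b' τ) θ :=
  ((hb.sub_const (b τ)).sub (((hasDerivAt_id θ).sub_const τ).const_mul (b' τ))).congr_deriv
    (by simp)

lemma bregmanDiv_pos (hs : Convex ℝ s) (hb : ∀ θ ∈ s, HasDerivAt b (b' θ) θ)
    (hb' : StrictMonoOn b' s) (hτ : τ ∈ s) (hθ : θ ∈ s) (hne : θ ≠ τ) :
    0 < bregmanDiv b b' τ θ := by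
  have hcont : ContinuousOn b s := fun z hz => (hb z hz).continuousAt.continuousWithinAt
  rcases hne.lt_or_gt with h | h
  · have hsub := hs.ordConnected.out hθ hτ
    obtain ⟨c, hc, hslope⟩ := exists_hasDerivAt_eq_slope b b' h (hcont.mono hsub)
      fun z hz => hb z (hsub (Ioo_subset_Icc_self hz))
    have : b' c < b' τ := hb' (hsub (Ioo_subset_Icc_self hc)) hτ hc.2
    rw [eq_div_iff (sub_ne_zero.2 h.ne')] at hslope
    unfold bregmanDiv; nlinarith
  · have hsub := hs.ordConnected.out hτ hθ
    obtain ⟨c, hc, hslope⟩ := exists_hasDerivAt_eq_slope b b' h (hcont.mono hsub)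
      fun z hz => hb z (hsub (Ioo_subset_Icc_self hz))
    have : b' τ < b' c := hb' hτ (hsub (Ioo_subset_Icc_self hc)) hc.1
    rw [eq_div_iff (sub_ne_zero.2 h.ne')] at hslope
    unfold bregmanDiv; nlinarith

lemma bregmanDiv_nonneg (hs : Convex ℝ s) (hb : ∀ θ ∈ s, HasDerivAt b (b' θ) θ)
    (hb' : StrictMonoOn b' s) (hτ : τ ∈ s) (hθ : θ ∈ s) : 0 ≤ bregmanDiv b b' τ θ := by
  rcases eq_or_ne θ τ with rfl | hne
  · simp
  · exact (bregmanDiv_pos hs hb hb' hτ hθ hne).le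

lemma bregmanDiv_le_of_mem_uIcc (hs : Convex ℝ s) (hb : ∀ θ ∈ s, HasDerivAt b (b' θ) θ)
    (hb' : StrictMonoOn b' s) (hτ : τ ∈ s) (hθ : θ ∈ s) (hσ : σ ∈ uIcc τ θ) :
    bregmanDiv b b' τ σ ≤ bregmanDiv b b' τ θ := by
  have hσs : σ ∈ s := hs.ordConnected.uIcc_subset hτ hθ hσ
  have hsign : 0 ≤ (b' σ - b' τ) * (θ - σ) := by
    rcases mem_uIcc.1 hσ with ⟨hτσ, hσθ⟩ | ⟨hθσ, hστ⟩
    · exact mul_nonneg (sub_nonneg.2 (hb'.monotoneOn hτ hσs hτσ)) (sub_nonneg.2 hσθ)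
    · exact mul_nonneg_of_nonpos_of_nonpos (sub_nonpos.2 (hb'.monotoneOn hσs hτ hστ))
        (sub_nonpos.2 hθσ)
  linarith [bregmanDiv_eq_add (b := b) (b' := b') τ σ θ, bregmanDiv_nonneg hs hb hb' hσs hθ]

end Bregman

section BregmanMix

variable {s : Set ℝ} {b b' : ℝ → ℝ} {τ₁ τ₂ x y θ : ℝ}

lemma bregmanMix_comm : bregmanMix b b' τ₁ τ₂ x y = bregmanMix b b' τ₂ τ₁ y x :=
  funext fun _ => add_comm _ _

lemma bregmanMixInf_comm : bregmanMixInf b b' s τ₁ τ₂ x y = bregmanMixInf b b' s τ₂ τ₁ y x := by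
  rw [bregmanMixInf, bregmanMixInf, bregmanMix_comm]

lemma hasDerivAt_bregmanMix (hb : HasDerivAt b (b' θ) θ) :
    HasDerivAt (bregmanMix b b' τ₁ τ₂ x y) (x * (b' θ - b' τ₁) + y * (b' θ - b' τ₂)) θ :=
  ((hasDerivAt_bregmanDiv hb τ₁).const_mul x).add ((hasDerivAt_bregmanDiv hb τ₂).const_mul y)

lemma not_isMinOn_bregmanMix (hs : IsOpen s) (hb : HasDerivAt b (b' τ₁) τ₁) (hτ₁ : τ₁ ∈ s)
    (hne : b' τ₁ ≠ b' τ₂) (hy : y ≠ 0) : ¬ IsMinOn (bregmanMix b b' τ₁ τ₂ x y) s τ₁ := by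
  intro hmin
  have := (hmin.isLocalMin (hs.mem_nhds hτ₁)).hasDerivAt_eq_zero (hasDerivAt_bregmanMix hb)
  simp only [sub_self, mul_zero, zero_add, mul_eq_zero, sub_eq_zero] at this
  tauto

lemma exists_isMinOn_bregmanMix (hs : Convex ℝ s) (hb : ∀ θ ∈ s, HasDerivAt b (b' θ) θ)
    (hb' : StrictMonoOn b' s) (hτ₁ : τ₁ ∈ s) (hτ₂ : τ₂ ∈ s) (hx : 0 ≤ x) (hy : 0 ≤ y) :
    ∃ θ ∈ uIcc τ₁ τ₂, IsMinOn (bregmanMix b b' τ₁ τ₂ x y) s θ := by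
  wlog hle : τ₂ ≤ τ₁ generalizing τ₁ τ₂ x y
  · obtain ⟨θ, hθ, hmin⟩ := this hτ₂ hτ₁ hy hx (le_of_not_ge hle)
    rw [uIcc_comm] at hθ
    exact ⟨θ, hθ, bregmanMix_comm (b := b) ▸ hmin⟩
  have hK : uIcc τ₁ τ₂ ⊆ s := hs.ordConnected.uIcc_subset hτ₁ hτ₂
  have hcont : ContinuousOn (bregmanMix b b' τ₁ τ₂ x y) (uIcc τ₁ τ₂) := fun θ hθ =>
    (hasDerivAt_bregmanMix (hb θ (hK hθ))).continuousAt.continuousWithinAt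
  obtain ⟨θ, hθ, hmin⟩ := isCompact_uIcc.exists_isMinOn nonempty_uIcc hcont
  refine ⟨θ, hθ, fun φ hφ => ?_⟩
  -- clamping `φ` to `[τ₂, τ₁]` increases neither divergence
  obtain ⟨ψ, hψ, hψφ⟩ : ∃ ψ ∈ uIcc τ₁ τ₂,
      bregmanMix b b' τ₁ τ₂ x y ψ ≤ bregmanMix b b' τ₁ τ₂ x y φ := by
    rcases lt_or_ge φ τ₂ with h₂ | h₂
    · refine ⟨τ₂, right_mem_uIcc, add_le_add (mul_le_mul_of_nonneg_left ?_ hx)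
        (mul_le_mul_of_nonneg_left ?_ hy)⟩
      · exact bregmanDiv_le_of_mem_uIcc hs hb hb' hτ₁ hφ (mem_uIcc_of_ge h₂.le hle)
      · simpa using bregmanDiv_nonneg hs hb hb' hτ₂ hφ
    rcases le_or_gt φ τ₁ with h₁ | h₁
    · exact ⟨φ, mem_uIcc_of_ge h₂ h₁, le_rfl⟩
    · refine ⟨τ₁, left_mem_uIcc, add_le_add (mul_le_mul_of_nonneg_left ?_ hx)
        (mul_le_mul_of_nonneg_left ?_ hy)⟩
      · simpa using bregmanDiv_nonneg hs hb hb' hτ₁ hφ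
      · exact bregmanDiv_le_of_mem_uIcc hs hb hb' hτ₂ hφ (mem_uIcc_of_le hle h₁.le)
  exact (hmin hψ).trans hψφ

lemma bregmanMixInf_eq_of_isMinOn (hθ : θ ∈ s) (hmin : IsMinOn (bregmanMix b b' τ₁ τ₂ x y) s θ) :
    bregmanMixInf b b' s τ₁ τ₂ x y = bregmanMix b b' τ₁ τ₂ x y θ :=
  IsLeast.csInf_eq ⟨mem_image_of_mem _ hθ, forall_mem_image.2 hmin⟩

lemma bregmanMixInf_le (hs : Convex ℝ s) (hb : ∀ θ ∈ s, HasDerivAt b (b' θ) θ)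
    (hb' : StrictMonoOn b' s) (hτ₁ : τ₁ ∈ s) (hτ₂ : τ₂ ∈ s) (hx : 0 ≤ x) (hy : 0 ≤ y)
    (hθ : θ ∈ s) : bregmanMixInf b b' s τ₁ τ₂ x y ≤ bregmanMix b b' τ₁ τ₂ x y θ := by
  obtain ⟨φ, hφ, hmin⟩ := exists_isMinOn_bregmanMix hs hb hb' hτ₁ hτ₂ hx hy
  rw [bregmanMixInf_eq_of_isMinOn (hs.ordConnected.uIcc_subset hτ₁ hτ₂ hφ) hmin]
  exact hmin hθ


lemma bregmanMixInf_le_add_mul_dist (hs : Convex ℝ s) (hb : ∀ θ ∈ s, HasDerivAt b (b' θ) θ)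
    (hb' : StrictMonoOn b' s) (hτ₁ : τ₁ ∈ s) (hτ₂ : τ₂ ∈ s) {x' y' : ℝ} (hx : 0 ≤ x) (hy : 0 ≤ y)
    (hx' : 0 ≤ x') (hy' : 0 ≤ y') :
    bregmanMixInf b b' s τ₁ τ₂ x' y' ≤ bregmanMixInf b b' s τ₁ τ₂ x y +
      (bregmanDiv b b' τ₁ τ₂ + bregmanDiv b b' τ₂ τ₁) * dist (x', y') (x, y) := by
  obtain ⟨θ, hθ, hmin⟩ := exists_isMinOn_bregmanMix hs hb hb' hτ₁ hτ₂ hx hy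
  have hθs : θ ∈ s := hs.ordConnected.uIcc_subset hτ₁ hτ₂ hθ
  have hd₁ : |x' - x| ≤ dist (x', y') (x, y) := by
    simp [Prod.dist_eq, Real.dist_eq]
  have hd₂ : |y' - y| ≤ dist (x', y') (x, y) := by
    simp [Prod.dist_eq, Real.dist_eq]
  have h₁ : (x' - x) * bregmanDiv b b' τ₁ θ ≤ dist (x', y') (x, y) * bregmanDiv b b' τ₁ τ₂ :=
    mul_le_mul ((le_abs_self _).trans hd₁) (bregmanDiv_le_of_mem_uIcc hs hb hb' hτ₁ hτ₂ hθ)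
      (bregmanDiv_nonneg hs hb hb' hτ₁ hθs) dist_nonneg
  have h₂ : (y' - y) * bregmanDiv b b' τ₂ θ ≤ dist (x', y') (x, y) * bregmanDiv b b' τ₂ τ₁ :=
    mul_le_mul ((le_abs_self _).trans hd₂)
      (bregmanDiv_le_of_mem_uIcc hs hb hb' hτ₂ hτ₁ (uIcc_comm τ₁ τ₂ ▸ hθ))
      (bregmanDiv_nonneg hs hb hb' hτ₂ hθs) dist_nonneg
  calc bregmanMixInf b b' s τ₁ τ₂ x' y' ≤ bregmanMix b b' τ₁ τ₂ x' y' θ :=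
        bregmanMixInf_le hs hb hb' hτ₁ hτ₂ hx' hy' hθs
    _ = bregmanMix b b' τ₁ τ₂ x y θ +
        ((x' - x) * bregmanDiv b b' τ₁ θ + (y' - y) * bregmanDiv b b' τ₂ θ) := by
      unfold bregmanMix; ring
    _ ≤ _ := by rw [bregmanMixInf_eq_of_isMinOn hθs hmin]; linarith

lemma continuousOn_bregmanMixInf (hs : Convex ℝ s) (hb : ∀ θ ∈ s, HasDerivAt b (b' θ) θ)
    (hb' : StrictMonoOn b' s) (hτ₁ : τ₁ ∈ s) (hτ₂ : τ₂ ∈ s) :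
    ContinuousOn (fun p : ℝ × ℝ => bregmanMixInf b b' s τ₁ τ₂ p.1 p.2) (Ici 0 ×ˢ Ici 0) :=
  (LipschitzOnWith.of_le_add_mul' _ fun _ hp _ hq =>
    bregmanMixInf_le_add_mul_dist hs hb hb' hτ₁ hτ₂ hq.1 hq.2 hp.1 hp.2).continuousOn

lemma bregmanMixInf_lt (hso : IsOpen s) (hs : Convex ℝ s) (hb : ∀ θ ∈ s, HasDerivAt b (b' θ) θ)
    (hb' : StrictMonoOn b' s) (hτ₁ : τ₁ ∈ s) (hτ₂ : τ₂ ∈ s) (hne : b' τ₁ ≠ b' τ₂)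
    (hx : 0 ≤ x) (hy : 0 < y) :
    bregmanMixInf b b' s τ₁ τ₂ x y < y * bregmanDiv b b' τ₂ τ₁ := by
  obtain ⟨θ, hθ, hmin⟩ := exists_isMinOn_bregmanMix hs hb hb' hτ₁ hτ₂ hx hy.le
  rw [bregmanMixInf_eq_of_isMinOn (hs.ordConnected.uIcc_subset hτ₁ hτ₂ hθ) hmin]
  have hτ₁_val : bregmanMix b b' τ₁ τ₂ x y τ₁ = y * bregmanDiv b b' τ₂ τ₁ := by
    simp [bregmanMix]
  refine hτ₁_val ▸ (hmin hτ₁).lt_of_ne fun heq => ?_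
  exact not_isMinOn_bregmanMix hso (hb τ₁ hτ₁) hτ₁ hne hy.ne' fun φ hφ => heq ▸ hmin hφ

lemma strictMonoOn_bregmanMixInf_left (hso : IsOpen s) (hs : Convex ℝ s)
    (hb : ∀ θ ∈ s, HasDerivAt b (b' θ) θ) (hb' : StrictMonoOn b' s) (hτ₁ : τ₁ ∈ s)
    (hτ₂ : τ₂ ∈ s) (hne : b' τ₁ ≠ b' τ₂) (hy : 0 < y) :
    StrictMonoOn (fun x => bregmanMixInf b b' s τ₁ τ₂ x y) (Ici 0) := by
  intro x' hx' x hx hlt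
  obtain ⟨θ, hθ, hmin⟩ := exists_isMinOn_bregmanMix hs hb hb' hτ₁ hτ₂ hx hy.le
  have hθs : θ ∈ s := hs.ordConnected.uIcc_subset hτ₁ hτ₂ hθ
  have hθτ₁ : θ ≠ τ₁ := by
    rintro rfl
    exact not_isMinOn_bregmanMix hso (hb θ hθs) hθs hne hy.ne' hmin
  have hpos := bregmanDiv_pos hs hb hb' hτ₁ hθs hθτ₁
  calc bregmanMixInf b b' s τ₁ τ₂ x' y ≤ bregmanMix b b' τ₁ τ₂ x' y θ :=
        bregmanMixInf_le hs hb hb' hτ₁ hτ₂ hx' hy.le hθs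
    _ < bregmanMix b b' τ₁ τ₂ x y θ := add_lt_add_left (mul_lt_mul_of_pos_right hlt hpos) _
    _ = bregmanMixInf b b' s τ₁ τ₂ x y := (bregmanMixInf_eq_of_isMinOn hθs hmin).symm

lemma strictMonoOn_bregmanMixInf_right (hso : IsOpen s) (hs : Convex ℝ s)
    (hb : ∀ θ ∈ s, HasDerivAt b (b' θ) θ) (hb' : StrictMonoOn b' s) (hτ₁ : τ₁ ∈ s)
    (hτ₂ : τ₂ ∈ s) (hne : b' τ₁ ≠ b' τ₂) (hx : 0 < x) :
    StrictMonoOn (fun y => bregmanMixInf b b' s τ₁ τ₂ x y) (Ici 0) := by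
  simp_rw [bregmanMixInf_comm (τ₁ := τ₁)]
  exact strictMonoOn_bregmanMixInf_left hso hs hb hb' hτ₂ hτ₁ hne.symm hx

end BregmanMix

theorem Phi_continuous_strictMono_lt_general
    (ρ : Measure ℝ)
    (Θ : Set ℝ) (hΘ : Θ = {θ : ℝ | Integrable (fun x => exp (θ * x)) ρ})
    (b b' b'' : ℝ → ℝ)
    (hb' : ∀ θ ∈ interior Θ, HasDerivAt b (b' θ) θ)
    (hb'' : ∀ θ ∈ interior Θ, HasDerivAt b' (b'' θ) θ)
    (hbpos : ∀ θ ∈ interior Θ, 0 < b'' θ)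
    (Iset : Set ℝ) (hI : Iset = b' '' (interior Θ))
    (kl : ℝ → ℝ → ℝ)
    (hkl : ∀ θ ∈ interior Θ, ∀ θ' ∈ interior Θ,
      kl (b' θ) (b' θ') = b θ' - b θ - b' θ * (θ' - θ))
    (μ₁ μj : ℝ) (hμ₁ : μ₁ ∈ Iset) (hμj : μj ∈ Iset) (hlt : μj < μ₁)
    (Φ : ℝ → ℝ → ℝ)
    (hΦ : ∀ x y : ℝ, Φ x y =
      sInf {v : ℝ | ∃ lam ∈ Iset, v = x * kl μ₁ lam + y * kl μj lam}) :
    ContinuousOn (fun p : ℝ × ℝ => Φ p.1 p.2) (Set.Ici 0 ×ˢ Set.Ici 0) ∧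
      (∀ y : ℝ, 0 < y → StrictMonoOn (fun x => Φ x y) (Set.Ici 0)) ∧
      (∀ x : ℝ, 0 < x → StrictMonoOn (fun y => Φ x y) (Set.Ici 0)) ∧
      (∀ x : ℝ, 0 ≤ x → ∀ y : ℝ, 0 < y → Φ x y < y * kl μj μ₁) := by
  have hconv : Convex ℝ (interior Θ) := by
    rw [hΘ]
    exact (ProbabilityTheory.convex_integrableExpSet (X := id) (μ := ρ)).interior
  have hmono : StrictMonoOn b' (interior Θ) :=
    strictMonoOn_of_deriv_pos hconv (fun θ hθ => (hb'' θ hθ).continuousAt.continuousWithinAt)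
      fun θ hθ => by
        rw [interior_interior] at hθ
        exact (hb'' θ hθ).deriv ▸ hbpos θ hθ
  obtain ⟨θ₁, h₁, rfl⟩ := hI ▸ hμ₁
  obtain ⟨θj, hj, rfl⟩ := hI ▸ hμj
  obtain rfl : Φ = bregmanMixInf b b' (interior Θ) θ₁ θj := by
    funext x y
    rw [hΦ, hI, bregmanMixInf]
    congr 1
    ext v
    simp only [mem_ofPred_eq, mem_image, exists_exists_and_eq_and]
    refine exists_congr fun θ => and_congr_right fun hθ => ?_
    rw [bregmanMix, bregmanDiv, bregmanDiv, hkl _ h₁ _ hθ, hkl _ hj _ hθ, eq_comm]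
  rw [hkl θj hj θ₁ h₁]
  exact ⟨continuousOn_bregmanMixInf hconv hb' hmono h₁ hj,
    fun y hy => strictMonoOn_bregmanMixInf_left isOpen_interior hconv hb' hmono h₁ hj hlt.ne' hy,
    fun x hx => strictMonoOn_bregmanMixInf_right isOpen_interior hconv hb' hmono h₁ hj hlt.ne' hx,
    fun x hx y hy => bregmanMixInf_lt isOpen_interior hconv hb' hmono h₁ hj hlt.ne' hx hy⟩

/-- `Φ` is continuous on `[0,∞)²`; for fixed `y > 0`, `x ↦ Φ x y` is strictly
increasing on `[0,∞)`; for fixed `x > 0`, `y ↦ Φ x y` is strictly increasing on `[0,∞)`; and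
for every `x ≥ 0` and `y > 0`, `Φ x y < y · kl μj μ₁`. -/
theorem Phi_continuous_strictMono_lt
    (ρ : Measure ℝ) [SigmaFinite ρ]
    (Θ : Set ℝ) (hΘ : Θ = {θ : ℝ | Integrable (fun x => exp (θ * x)) ρ})
    (b b' b'' : ℝ → ℝ)
    (hb : ∀ θ ∈ Θ, b θ = log (∫ x, exp (θ * x) ∂ρ))
    (hb' : ∀ θ ∈ interior Θ, HasDerivAt b (b' θ) θ)
    (hb'' : ∀ θ ∈ interior Θ, HasDerivAt b' (b'' θ) θ)
    (hbpos : ∀ θ ∈ interior Θ, 0 < b'' θ)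
    (Iset : Set ℝ) (hI : Iset = b' '' (interior Θ))
    (kl : ℝ → ℝ → ℝ)
    (hkl : ∀ θ ∈ interior Θ, ∀ θ' ∈ interior Θ,
      kl (b' θ) (b' θ') = b θ' - b θ - b' θ * (θ' - θ))
    (μ₁ μj : ℝ) (hμ₁ : μ₁ ∈ Iset) (hμj : μj ∈ Iset) (hlt : μj < μ₁)
    (Φ : ℝ → ℝ → ℝ)
    (hΦ : ∀ x y : ℝ, Φ x y =
      sInf {v : ℝ | ∃ lam ∈ Iset, v = x * kl μ₁ lam + y * kl μj lam}) :
    ContinuousOn (fun p : ℝ × ℝ => Φ p.1 p.2) (Set.Ici 0 ×ˢ Set.Ici 0) ∧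
      (∀ y : ℝ, 0 < y → StrictMonoOn (fun x => Φ x y) (Set.Ici 0)) ∧
      (∀ x : ℝ, 0 < x → StrictMonoOn (fun y => Φ x y) (Set.Ici 0)) ∧
      (∀ x : ℝ, 0 ≤ x → ∀ y : ℝ, 0 < y → Φ x y < y * kl μj μ₁) :=
  Phi_continuous_strictMono_lt_general ρ Θ hΘ b b' b'' hb' hb'' hbpos Iset hI kl hkl μ₁ μj hμ₁ hμj
    hlt Φ hΦ
end
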